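/- Suppose there exists δ > 0 such that p_i > δ for all i ≥ 1. Then there exists a real number R > 1 such that for every z ∈ ℂ and every nonnegative integer k, if |q_{F_k}(z)| > R then the sequence (q_{F_n}(z))_{n≥0} is unbounded; in fact any R with R > 2/δ − 1 works. -/

import Mathlib

/-- `rr p n = r_n = p (⌊(n+1)/2⌋ + 1)`. -/
noncomputable def rr (p : ℕ → ℝ) (n : ℕ) : ℝ := p ((n+1)/2 + 1)

/-- `qF p z n = q_{F_n}(z)`. -/
noncomputable def qF (p : ℕ → ℝ) (z : ℂ) : ℕ → ℂ
  | 0 => (z - (1 - (p 1 : ℂ))) / (p 1 : ℂ)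
  | 1 => (1 / (p 2 : ℂ)) * (qF p z 0) ^ 2 - (1 / (p 2 : ℂ) - 1)
  | (n+2) => (1 / (rr p (n+2) : ℂ)) * qF p z (n+1) * qF p z n - (1 / (rr p (n+2) : ℂ) - 1)

/-!
Write `a n = ‖q_{F_n}‖`. The recursion reads `q_{n+1} q_n = r q_{n+2} + (1 - r)` with
`δ ≤ r ≤ 1`, so `a (n+1) a n` and `r a (n+2)` differ by at most `1 - r`. Hence a product
`a (n+1) a n ≥ 1` forces `a (n+2) ≥ a (n+1) a n`, while a large `a (n+2)` forces
`a (n+1) a n ≥ δ (a (n+2) + 1) - 1`.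

Suppose the sequence is bounded with supremum `M > 2/δ - 1`, i.e. `δ (M + 1) - 1 > 1`.
Take an index `m` with `a m` close to `M`. Looking back, `a (m-1) ≥ (δ (a m + 1) - 1) / M`;
looking forward twice, `a (m+2) ≥ a m ^ 2 a (m-1) ≥ a m ^ 2 (δ (a m + 1) - 1) / M`,
which tends to `M (δ (M + 1) - 1) > M` as `a m → M`: a contradiction.
-/

open Topology

lemma abs_norm_mul_norm_sub_le {r : ℝ} (hr0 : 0 ≤ r) (hr1 : r ≤ 1) {a b c : ℂ}
    (h : a * b = r * c + (1 - r)) : |‖a‖ * ‖b‖ - r * ‖c‖| ≤ 1 - r := by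
  have hc : ‖(r : ℂ) * c‖ = r * ‖c‖ := by
    rw [norm_mul, Complex.norm_real, Real.norm_of_nonneg hr0]
  calc |‖a‖ * ‖b‖ - r * ‖c‖| = |‖a * b‖ - ‖(r : ℂ) * c‖| := by rw [norm_mul, hc]
    _ ≤ ‖a * b - r * c‖ := abs_norm_sub_norm_le _ _
    _ = 1 - r := by
      rw [h, add_sub_cancel_left, ← Complex.ofReal_one, ← Complex.ofReal_sub, Complex.norm_real,
        Real.norm_of_nonneg (sub_nonneg.2 hr1)]

lemma norm_mul_norm_le_of_mul_eq {r : ℝ} (hr0 : 0 < r) (hr1 : r ≤ 1) {a b c : ℂ}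
    (h : a * b = r * c + (1 - r)) (hab : 1 ≤ ‖a‖ * ‖b‖) : ‖a‖ * ‖b‖ ≤ ‖c‖ := by
  have := (abs_le.1 (abs_norm_mul_norm_sub_le hr0.le hr1 h)).2
  nlinarith

lemma le_norm_mul_norm_of_mul_eq {δ r : ℝ} (hδ : 0 ≤ δ) (hδr : δ ≤ r) (hr1 : r ≤ 1) {a b c : ℂ}
    (h : a * b = r * c + (1 - r)) : δ * (‖c‖ + 1) - 1 ≤ ‖a‖ * ‖b‖ := by
  have := (abs_le.1 (abs_norm_mul_norm_sub_le (hδ.trans hδr) hr1 h)).1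
  nlinarith [norm_nonneg c]

section ProductRecurrence

variable {u : ℕ → ℂ} {r : ℕ → ℝ} {δ : ℝ}

lemma mul_norm_mul_norm_le_norm_add_three
    (hu : ∀ n, u (n + 1) * u n = r n * u (n + 2) + (1 - r n)) (hr : ∀ n, 0 < r n ∧ r n ≤ 1)
    {n : ℕ} {x : ℝ} (hx : 1 ≤ x) (hxu : x ≤ ‖u (n + 1)‖) (hprod : 1 ≤ ‖u (n + 1)‖ * ‖u n‖) :
    x * (‖u (n + 1)‖ * ‖u n‖) ≤ ‖u (n + 3)‖ := by
  have hgrow := norm_mul_norm_le_of_mul_eq (hr n).1 (hr n).2 (hu n) hprod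
  have hprod' : x * (‖u (n + 1)‖ * ‖u n‖) ≤ ‖u (n + 2)‖ * ‖u (n + 1)‖ := by
    rw [mul_comm x]; exact mul_le_mul hgrow hxu (by linarith) (norm_nonneg _)
  exact hprod'.trans <| norm_mul_norm_le_of_mul_eq (hr (n + 1)).1 (hr (n + 1)).2 (hu (n + 1))
    (one_le_mul_of_one_le_of_one_le hx hprod |>.trans hprod')

lemma exists_lt_forall_norm_add_two_le
    (hu : ∀ n, u (n + 1) * u n = r n * u (n + 2) + (1 - r n)) (hr : ∀ n, δ ≤ r n ∧ r n ≤ 1)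
    (hδ : 0 < δ) {M : ℝ} (hM : ∀ n, ‖u n‖ ≤ M) (hMδ : 2 < δ * (M + 1)) :
    ∃ x, 1 < x ∧ x < M ∧ ∀ n, ‖u (n + 2)‖ ≤ x := by
  have hM1 : 1 < M := by nlinarith [(hr 0).1.trans (hr 0).2]
  obtain ⟨x, ⟨hgx, hx1⟩, hxM⟩ : ∃ x, (M ^ 2 < x ^ 2 * (δ * (x + 1) - 1) ∧ 1 < x) ∧ x < M := by
    have hgM : M ^ 2 < M ^ 2 * (δ * (M + 1) - 1) := by
      nlinarith [mul_pos (pow_pos (zero_lt_one.trans hM1) 2) (sub_pos.2 hMδ)]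
    have hg : Continuous fun x : ℝ => x ^ 2 * (δ * (x + 1) - 1) := by fun_prop
    exact (((hg.tendsto M).eventually (lt_mem_nhds hgM)).and (eventually_gt_nhds hM1)
      |>.filter_mono nhdsWithin_le_nhds |>.and (self_mem_nhdsWithin : Set.Iio M ∈ 𝓝[<] M)).exists
  refine ⟨x, hx1, hxM, fun n => le_of_not_gt fun hn => ?_⟩
  set a := ‖u (n + 2)‖
  set b := ‖u (n + 1)‖
  have hback := le_norm_mul_norm_of_mul_eq hδ.le (hr n).1 (hr n).2 (hu n)
  have hMb : x * (δ * (x + 1) - 1) ≤ M * (a * b) :=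
    calc x * (δ * (x + 1) - 1) ≤ a * (b * ‖u n‖) :=
          mul_le_mul hn.le (by nlinarith) (by nlinarith) (norm_nonneg _)
      _ ≤ a * (b * M) := by gcongr; exact hM n
      _ = M * (a * b) := by ring
  have hMxab : M < x * (a * b) := by nlinarith
  have hab : 1 ≤ a * b := by nlinarith
  have hforward := mul_norm_mul_norm_le_norm_add_three hu
    (fun k => ⟨hδ.trans_le (hr k).1, (hr k).2⟩) hx1.le hn.le hab
  linarith [hM (n + 1 + 3)]

end ProductRecurrence

lemma qF_mul_qF_sub_one {p : ℕ → ℝ} (z : ℂ) {n : ℕ} (h : rr p (n + 1) ≠ 0) :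
    qF p z n * qF p z (n - 1) = rr p (n + 1) * qF p z (n + 1) + (1 - rr p (n + 1)) := by
  have h' : (rr p (n + 1) : ℂ) ≠ 0 := by exact_mod_cast h
  rcases n with _ | n
  · change (p 2 : ℂ) ≠ 0 at h'
    rw [qF.eq_2, show rr p 1 = p 2 from rfl]
    field_simp
    ring
  · rw [qF.eq_3, Nat.add_sub_cancel]
    field_simp
    ring

lemma qF_norm_unbounded {p : ℕ → ℝ} {δ : ℝ} (hδ : 0 < δ) (hp : ∀ i, 1 ≤ i → δ ≤ p i ∧ p i ≤ 1)
    {z : ℂ} {k : ℕ} (hk : 2 / δ - 1 < ‖qF p z k‖) : ¬ ∃ C : ℝ, ∀ n, ‖qF p z n‖ ≤ C := by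
  rintro ⟨C, hC⟩
  have hbdd : BddAbove (Set.range fun n => ‖qF p z n‖) := ⟨C, Set.forall_mem_range.2 hC⟩
  set M := ⨆ n, ‖qF p z n‖
  have hM : ∀ n, ‖qF p z n‖ ≤ M := le_ciSup hbdd
  have hMδ : 2 < δ * (M + 1) := by
    rw [mul_comm, ← div_lt_iff₀ hδ]
    linarith [hk.trans_le (hM k)]
  have hr : ∀ n, δ ≤ rr p (n + 1) ∧ rr p (n + 1) ≤ 1 := fun n => hp _ (Nat.le_add_left 1 _)
  have hr₀ : ∀ n, 0 < rr p (n + 1) ∧ rr p (n + 1) ≤ 1 :=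
    fun n => ⟨hδ.trans_le (hr n).1, (hr n).2⟩
  -- Repeating `q_0` makes `q_0 ^ 2 = p_2 q_1 + (1 - p_2)` the first step of the recursion.
  set u : ℕ → ℂ := fun n => qF p z (n - 1)
  have hu : ∀ n, u (n + 1) * u n = rr p (n + 1) * u (n + 2) + (1 - rr p (n + 1)) :=
    fun n => qF_mul_qF_sub_one z (hr₀ n).1.ne'
  obtain ⟨x, hx1, hxM, hx⟩ := exists_lt_forall_norm_add_two_le hu hr hδ (fun n => hM _) hMδ
  have h0 : ‖qF p z 0‖ ≤ x := by
    by_contra! h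
    have h1 : 1 ≤ ‖qF p z 0‖ := (hx1.trans h).le
    have hcube := mul_norm_mul_norm_le_norm_add_three (n := 0) hu hr₀ h1 le_rfl
      (one_le_mul_of_one_le_of_one_le h1 h1)
    nlinarith [hx 1]
  have hMx : M ≤ x := ciSup_le fun n => by
    rcases n with _ | n
    · exact h0
    · exact hx n
  exact hMx.not_gt hxM

/-- Suppose `p i > δ > 0` for all `i ≥ 1`.  Then there is `R > 1`
such that whenever `|q_{F_k}(z)| > R` for some `k`, the sequence `(q_{F_n}(z))ₙ` is
unbounded; in fact any `R > 2/δ - 1` works. -/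
theorem stmt13 (p : ℕ → ℝ) (hp : ∀ i, 1 ≤ i → 0 < p i ∧ p i ≤ 1)
    (δ : ℝ) (hδ : 0 < δ) (hpδ : ∀ i, 1 ≤ i → δ < p i) :
    (∃ R : ℝ, 1 < R ∧ ∀ z : ℂ, ∀ k : ℕ, R < ‖qF p z k‖ →
      ¬ ∃ C : ℝ, ∀ n : ℕ, ‖qF p z n‖ ≤ C) ∧
    (∀ R : ℝ, 2/δ - 1 < R → ∀ z : ℂ, ∀ k : ℕ, R < ‖qF p z k‖ →
      ¬ ∃ C : ℝ, ∀ n : ℕ, ‖qF p z n‖ ≤ C) := by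
  have hp' : ∀ i, 1 ≤ i → δ ≤ p i ∧ p i ≤ 1 := fun i hi => ⟨(hpδ i hi).le, (hp i hi).2⟩
  have hR : ∀ R : ℝ, 2/δ - 1 < R → ∀ z : ℂ, ∀ k : ℕ, R < ‖qF p z k‖ →
      ¬ ∃ C : ℝ, ∀ n : ℕ, ‖qF p z n‖ ≤ C :=
    fun R hR z k hk => qF_norm_unbounded hδ hp' (hR.trans hk)
  have hδ1 : δ < 1 := (hpδ 1 le_rfl).trans_le (hp 1 le_rfl).2
  exact ⟨⟨2 / δ, (one_lt_div hδ).2 (by linarith), hR _ (by linarith)⟩, hR⟩
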